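/- Fix M ≥ 1, labels y ∈ {0,1}^M, and a positional-invariant performance measure μ, and let E_j(y) := (1/C(M,j)) Σ_{ŷ∈Y_j} μ(ŷ, y). For a probability mass function h on {0,1}^M, equality Perf_{μ,y}(h) = max_{j∈{0,…,M}} E_j(y) holds if and only if h places all probability mass on maximizing groups, i.e., Σ_{j ∈ argmax_{j'} E_{j'}(y)} P_h(Y_j) = 1, where P_h(Y_j) := Σ_{ŷ∈Y_j} h(ŷ). -/

import Mathlib

/-- `Yset M j`: binary vectors of length `M` (functions `Fin M → Bool`) with exactly `j` ones. -/
def Yset (M j : ℕ) : Finset (Fin M → Bool) :=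
  Finset.univ.filter (fun v => (Finset.univ.filter (fun i => v i = true)).card = j)

/-- A performance measure is positional-invariant if permuting predictions and labels
simultaneously leaves it unchanged. -/
def PosInvariant (M : ℕ) (μ : (Fin M → Bool) → (Fin M → Bool) → ℝ) : Prop :=
  ∀ (π : Equiv.Perm (Fin M)) (yhat y : Fin M → Bool), μ (yhat ∘ ⇑π) (y ∘ ⇑π) = μ yhat y

/-- Group average `E_j(y)`: the mean of `μ(yhat, y)` over `yhat ∈ Y_j`. -/
noncomputable def Egroup (M : ℕ) (μ : (Fin M → Bool) → (Fin M → Bool) → ℝ)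
    (y : Fin M → Bool) (j : ℕ) : ℝ :=
  (1 / (M.choose j : ℝ)) * ∑ yhat ∈ Yset M j, μ yhat y

/-- Permuted expected performance of an input-independent classifier with pmf `h`. -/
noncomputable def Perf (M : ℕ) (μ : (Fin M → Bool) → (Fin M → Bool) → ℝ)
    (y : Fin M → Bool) (h : (Fin M → Bool) → ℝ) : ℝ :=
  (1 / (M.factorial : ℝ)) *
    ∑ π : Equiv.Perm (Fin M), ∑ yhat : Fin M → Bool, h yhat * μ yhat (y ∘ ⇑π)

/-- Dutch Draw classifier `DD_j`: the uniform distribution on `Y_j`. -/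
noncomputable def DD (M j : ℕ) : (Fin M → Bool) → ℝ :=
  fun yhat => if yhat ∈ Yset M j then 1 / (M.choose j : ℝ) else 0

section Aux
open Finset

lemma mem_Yset {M j : ℕ} {v : Fin M → Bool} :
    v ∈ Yset M j ↔ (Finset.univ.filter (fun i => v i = true)).card = j := by
  simp [Yset]

lemma count_comp_perm {M : ℕ} (v : Fin M → Bool) (π : Equiv.Perm (Fin M)) :
    (Finset.univ.filter (fun i => v (π i) = true)).card
      = (Finset.univ.filter (fun i => v i = true)).card := by
  apply Finset.card_bij (fun i _ => π i)
  · intro a ha; simp_all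
  · intro a _ b _ hab; exact π.injective hab
  · intro b hb; exact ⟨π.symm b, by simp_all, by simp⟩

lemma comp_perm_mem_Yset {M j : ℕ} {v : Fin M → Bool} (hv : v ∈ Yset M j)
    (π : Equiv.Perm (Fin M)) : v ∘ ⇑π ∈ Yset M j := by
  rw [mem_Yset] at hv ⊢
  simpa [Function.comp] using (count_comp_perm v π).trans hv

lemma exists_perm_comp {M j : ℕ} {v w : Fin M → Bool} (hv : v ∈ Yset M j) (hw : w ∈ Yset M j) :
    ∃ π : Equiv.Perm (Fin M), w ∘ ⇑π = v := by
  rw [mem_Yset] at hv hw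
  have hcard : Fintype.card {i // v i = true} = Fintype.card {i // w i = true} := by
    rw [Fintype.card_subtype, Fintype.card_subtype, hv, hw]
  refine ⟨(Fintype.equivOfCardEq hcard).extendSubtype, funext fun i => ?_⟩
  rcases Bool.eq_false_or_eq_true (v i) with hvi | hvi
  · have := Equiv.extendSubtype_mem (Fintype.equivOfCardEq hcard) i hvi
    simp only [Function.comp_apply]
    rw [this, hvi]
  · have := Equiv.extendSubtype_not_mem (Fintype.equivOfCardEq hcard) i (by simp [hvi])
    simp only [Function.comp_apply]
    rw [Bool.eq_false_iff.mpr this, hvi]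

lemma image_comp_perm {M j : ℕ} {v : Fin M → Bool} (hv : v ∈ Yset M j) :
    Finset.univ.image (fun π : Equiv.Perm (Fin M) => v ∘ ⇑π) = Yset M j := by
  apply Finset.Subset.antisymm
  · intro w hw
    simp only [Finset.mem_image, Finset.mem_univ, true_and] at hw
    obtain ⟨π, rfl⟩ := hw
    exact comp_perm_mem_Yset hv π
  · intro w hw
    obtain ⟨π, hπ⟩ := exists_perm_comp hw hv
    exact Finset.mem_image.mpr ⟨π, Finset.mem_univ _, hπ⟩

lemma fiber_card_const {M j : ℕ} {v w : Fin M → Bool} (hv : v ∈ Yset M j) (hw : w ∈ Yset M j) :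
    (Finset.univ.filter (fun π : Equiv.Perm (Fin M) => v ∘ ⇑π = w)).card
      = (Finset.univ.filter (fun π : Equiv.Perm (Fin M) => v ∘ ⇑π = v)).card := by
  obtain ⟨π₀, hπ₀⟩ := exists_perm_comp hv hw   -- v ∘ π₀ = w
  apply Finset.card_bij' (fun π _ => π * π₀) (fun τ _ => τ * π₀⁻¹)
  · intro π hπ
    simp only [Finset.mem_filter, Finset.mem_univ, true_and] at hπ ⊢
    funext i
    simp only [Function.comp_apply, Equiv.Perm.coe_mul]
    have h1 : v (π (π₀ i)) = w (π₀ i) := congrFun hπ _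
    have h2 : w (π₀ i) = v i := congrFun hπ₀ i
    exact h1.trans h2
  · intro τ hτ
    simp only [Finset.mem_filter, Finset.mem_univ, true_and] at hτ ⊢
    funext i
    simp only [Function.comp_apply, Equiv.Perm.coe_mul]
    have h1 : v (τ (π₀⁻¹ i)) = v (π₀⁻¹ i) := congrFun hτ _
    have h2 : v (π₀⁻¹ i) = w i := by
      have := congrFun hπ₀ (π₀⁻¹ i)
      simpa using this.symm
    exact h1.trans h2
  · intro π _; group
  · intro τ _; group

lemma card_Yset (M j : ℕ) : (Yset M j).card = M.choose j := by
  have : M.choose j = (Finset.powersetCard j (Finset.univ : Finset (Fin M))).card := by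
    rw [Finset.card_powersetCard, Finset.card_fin]
  rw [this]
  · apply Finset.card_bij (fun v _ => Finset.univ.filter (fun i => v i = true))
    · intro v hv
      rw [mem_Yset] at hv
      simp [Finset.mem_powersetCard, hv]
    · intro v _ w _ hvw
      funext i
      have : i ∈ Finset.univ.filter (fun i => v i = true)
          ↔ i ∈ Finset.univ.filter (fun i => w i = true) := by rw [hvw]
      simp only [Finset.mem_filter, Finset.mem_univ, true_and] at this
      cases hvi : v i <;> cases hwi : w i <;> simp_all
    · intro s hs
      rw [Finset.mem_powersetCard] at hs
      refine ⟨fun i => decide (i ∈ s), ?_, ?_⟩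
      · rw [mem_Yset]
        rw [← hs.2]
        congr 1
        ext i; simp
      · ext i; simp

lemma choose_ne_zero {M j : ℕ} (hj : j ≤ M) : (M.choose j : ℝ) ≠ 0 := by
  exact_mod_cast Nat.pos_iff_ne_zero.mp (Nat.choose_pos hj)




lemma Yset_j_le {M j : ℕ} {v : Fin M → Bool} (hv : v ∈ Yset M j) : j ≤ M := by
  rw [mem_Yset] at hv
  calc j = _ := hv.symm
    _ ≤ (Finset.univ : Finset (Fin M)).card := Finset.card_filter_le _ _
    _ = M := by simp

lemma avg_perm {M j : ℕ} (μ : (Fin M → Bool) → (Fin M → Bool) → ℝ) (hμ : PosInvariant M μ)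
    (y : Fin M → Bool) {v : Fin M → Bool} (hv : v ∈ Yset M j) :
    (1 / (M.factorial : ℝ)) * ∑ π : Equiv.Perm (Fin M), μ v (y ∘ ⇑π) = Egroup M μ y j := by
  classical
  set c := (Finset.univ.filter (fun π : Equiv.Perm (Fin M) => v ∘ ⇑π = v)).card with hc
  -- Step 1: rewrite each term
  have step1 : ∑ π : Equiv.Perm (Fin M), μ v (y ∘ ⇑π)
      = ∑ π : Equiv.Perm (Fin M), μ (v ∘ ⇑π) y := by
    have e1 : ∀ π : Equiv.Perm (Fin M), μ v (y ∘ ⇑π) = μ (v ∘ ⇑π⁻¹) y := by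
      intro π
      have := hμ π (v ∘ ⇑π⁻¹) y
      rw [← this]
      congr 1
      funext i
      simp
    simp_rw [e1]
    exact Finset.sum_equiv (Equiv.inv (Equiv.Perm (Fin M))) (by simp) (fun π _ => rfl)
  -- Step 2: group by image
  have step2 : ∑ π : Equiv.Perm (Fin M), μ (v ∘ ⇑π) y
      = (c : ℝ) * ∑ w ∈ Yset M j, μ w y := by
    rw [Finset.sum_comp (fun w => μ w y) (fun π : Equiv.Perm (Fin M) => v ∘ ⇑π),
      image_comp_perm hv, Finset.mul_sum]
    apply Finset.sum_congr rfl
    intro w hw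
    rw [fiber_card_const hv hw]
    simp [hc, mul_comm]
  -- Step 3: c * choose = M!
  have step3 : c * M.choose j = M.factorial := by
    have := Finset.card_eq_sum_card_image (fun π : Equiv.Perm (Fin M) => v ∘ ⇑π) Finset.univ
    rw [image_comp_perm hv] at this
    rw [Finset.card_univ, Fintype.card_perm, Fintype.card_fin] at this
    rw [this, Finset.sum_congr rfl (fun w hw => fiber_card_const hv hw)]
    rw [Finset.sum_const, card_Yset, smul_eq_mul, mul_comm]
  have hj : j ≤ M := Yset_j_le hv
  have hC : (M.choose j : ℝ) ≠ 0 := choose_ne_zero hj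
  have hF : (M.factorial : ℝ) ≠ 0 := by exact_mod_cast M.factorial_ne_zero
  rw [step1, step2, Egroup]
  have hcF : (c : ℝ) * (M.choose j : ℝ) = (M.factorial : ℝ) := by exact_mod_cast step3
  field_simp
  ring_nf
  rw [← hcF]
  ring

lemma perf_eq_sum (M : ℕ) (μ : (Fin M → Bool) → (Fin M → Bool) → ℝ) (hμ : PosInvariant M μ)
    (y : Fin M → Bool) (h : (Fin M → Bool) → ℝ) :
    Perf M μ y h
      = ∑ j ∈ Finset.range (M + 1), (∑ yhat ∈ Yset M j, h yhat) * Egroup M μ y j := by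
  classical
  have swap : Perf M μ y h
      = ∑ v : Fin M → Bool, h v * ((1 / (M.factorial : ℝ)) * ∑ π : Equiv.Perm (Fin M), μ v (y ∘ ⇑π)) := by
    rw [Perf, Finset.sum_comm, Finset.mul_sum]
    apply Finset.sum_congr rfl
    intro v _
    rw [Finset.mul_sum, Finset.mul_sum, Finset.mul_sum]
    apply Finset.sum_congr rfl
    intro π _
    ring
  rw [swap]
  have maps : ∀ v : Fin M → Bool, v ∈ Finset.univ →
      (Finset.univ.filter (fun i => v i = true)).card ∈ Finset.range (M + 1) := by
    intro v _
    rw [Finset.mem_range, Nat.lt_succ_iff]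
    exact Yset_j_le (mem_Yset.mpr rfl)
  rw [← Finset.sum_fiberwise_of_maps_to maps
    (fun v => h v * ((1 / (M.factorial : ℝ)) * ∑ π : Equiv.Perm (Fin M), μ v (y ∘ ⇑π)))]
  apply Finset.sum_congr rfl
  intro j _
  rw [Finset.sum_mul]
  apply Finset.sum_congr rfl
  intro v hv
  have hv' : v ∈ Yset M j := hv
  rw [avg_perm μ hμ y hv']

end Aux

/-- Equality with the maximal group average holds iff all probability mass lies on maximizing
groups. -/
theorem perf_eq_max_iff (M : ℕ) (hM : 1 ≤ M)
    (μ : (Fin M → Bool) → (Fin M → Bool) → ℝ) (y : Fin M → Bool)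
    (hμ : PosInvariant M μ)
    (h : (Fin M → Bool) → ℝ)
    (hpos : ∀ v, 0 ≤ h v) (hsum : ∑ v : Fin M → Bool, h v = 1) :
    Perf M μ y h = (Finset.range (M + 1)).sup' Finset.nonempty_range_add_one (Egroup M μ y)
      ↔ ∑ j ∈ (Finset.range (M + 1)).filter
            (fun j => Egroup M μ y j
              = (Finset.range (M + 1)).sup' Finset.nonempty_range_add_one (Egroup M μ y)),
          (∑ yhat ∈ Yset M j, h yhat) = 1 := by
  classical
  set s : Finset ℕ := Finset.range (M + 1) with hs
  set B : ℝ := s.sup' Finset.nonempty_range_add_one (Egroup M μ y) with hB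
  set E : ℕ → ℝ := Egroup M μ y with hE
  set p : ℕ → ℝ := fun j => ∑ yhat ∈ Yset M j, h yhat with hp
  have hp0 : ∀ j, 0 ≤ p j := fun j => Finset.sum_nonneg (fun v _ => hpos v)
  have maps : ∀ v : Fin M → Bool, v ∈ Finset.univ →
      (Finset.univ.filter (fun i => v i = true)).card ∈ s := by
    intro v _
    rw [hs, Finset.mem_range, Nat.lt_succ_iff]
    exact Yset_j_le (mem_Yset.mpr rfl)
  have hp1 : ∑ j ∈ s, p j = 1 := by
    rw [← hsum]
    exact Finset.sum_fiberwise_of_maps_to maps h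
  have hEB : ∀ j ∈ s, E j ≤ B := fun j hj => Finset.le_sup' (Egroup M μ y) hj
  have hperf : Perf M μ y h = ∑ j ∈ s, p j * E j := perf_eq_sum M μ hμ y h
  have hsplit : ∑ j ∈ s.filter (fun j => E j = B), p j
      + ∑ j ∈ s.filter (fun j => ¬(E j = B)), p j = 1 := by
    rw [Finset.sum_filter_add_sum_filter_not, hp1]
  rw [hperf]
  constructor
  · intro hEq
    have hzero : ∑ j ∈ s, p j * (B - E j) = 0 := by
      have : ∑ j ∈ s, p j * (B - E j) = B * ∑ j ∈ s, p j - ∑ j ∈ s, p j * E j := by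
        rw [Finset.mul_sum, ← Finset.sum_sub_distrib]
        exact Finset.sum_congr rfl (fun j _ => by ring)
      rw [this, hp1, hEq]
      ring
    have heach := (Finset.sum_eq_zero_iff_of_nonneg
      (fun j hj => mul_nonneg (hp0 j) (sub_nonneg.mpr (hEB j hj)))).mp hzero
    have hnot : ∑ j ∈ s.filter (fun j => ¬(E j = B)), p j = 0 := by
      apply Finset.sum_eq_zero
      intro j hj
      rw [Finset.mem_filter] at hj
      have hne : B - E j ≠ 0 := sub_ne_zero.mpr (Ne.symm hj.2)
      have := heach j hj.1
      rcases mul_eq_zero.mp this with h0 | h0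
      · exact h0
      · exact absurd h0 hne
    linarith [hsplit]
  · intro hfilter
    have hnot : ∑ j ∈ s.filter (fun j => ¬(E j = B)), p j = 0 := by linarith [hsplit]
    have hnoteach := (Finset.sum_eq_zero_iff_of_nonneg
      (fun j _ => hp0 j)).mp hnot
    rw [← Finset.sum_filter_add_sum_filter_not s (fun j => E j = B) (fun j => p j * E j)]
    have h1 : ∑ j ∈ s.filter (fun j => E j = B), p j * E j = B := by
      have hc : ∑ j ∈ s.filter (fun j => E j = B), p j * E j
          = ∑ j ∈ s.filter (fun j => E j = B), p j * B := by
        apply Finset.sum_congr rfl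
        intro j hj
        rw [Finset.mem_filter] at hj
        rw [hj.2]
      rw [hc, ← Finset.sum_mul, hfilter, one_mul]
    have h2 : ∑ j ∈ s.filter (fun j => ¬(E j = B)), p j * E j = 0 := by
      apply Finset.sum_eq_zero
      intro j hj
      rw [hnoteach j hj, zero_mul]
    rw [h1, h2, add_zero]
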